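/- arXiv:1902.03973 — 2 statements merged into one kernel-verified Lean document; each statement's English description precedes it below -/
import Mathlib

section
/- (Proposition 1.) Let ε, μ > 0, δ := √(μ/3), T > 0, and let ζ, q : [0,T] × [0,∞) → ℝ be of class C³ with h := 1 + εζ > 0 everywhere, satisfying the dimensionless Abbott–Boussinesq system ∂_t ζ + ∂_x q = 0 and ∂_t q − (μ/3) ∂_x² ∂_t q + ∂_x 𝔣(ζ, q) = 0 on [0,T] × [0,∞), where 𝔣(ζ,q) = (1/(2ε))(h² − 1) + ε q²/h. Suppose that for each t ∈ [0,T] the function x ↦ ∂_t q(t,x) is square-integrable on (0,∞), and that v : [0,T] × [0,∞) → ℝ is such that for each t, v(t,·) is C³ with v(t,·), ∂_x v(t,·), ∂_x² v(t,·), ∂_x³ v(t,·) square-integrable on (0,∞), v(t,·) − (μ/3) ∂_x² v(t,·) = 𝔣(ζ,q)(t,·) on [0,∞) and ∂_x v(t,0) = 0. Define f(t) := ζ(t,0) and q̄(t) := q(t,0). Then for all t ∈ [0,T], q̄′(t) − (ε/δ) q̄(t)²/(1 + ε f(t)) = δ f″(t) + (1/δ)(1 + (ε/2) f(t)) f(t)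 − (1/δ) v(t,0). -/
open Set MeasureTheory

/-- `f` is square-integrable on `(0, ∞)` (w.r.t. Lebesgue measure). -/
def SqInt (f : ℝ → ℝ) : Prop := IntegrableOn (fun x => f x ^ 2) (Ioi 0)

/-!
At a fixed time put `w = ∂ₜq + ∂ₓv`. Differentiating `v - δ² ∂ₓ²v = 𝔣` in `x` and inserting it
into the momentum equation gives the Helmholtz equation `w - δ² ∂ₓ²w = 0` on the half line.
Its solutions are `A e^{x/δ} + B e^{-x/δ}`, and square-integrability forces `A = 0`, i.e. the
Robin condition `∂ₓw + w/δ = 0` at `x = 0`. There `∂ₓv = 0`, `δ² ∂ₓ²v = v - 𝔣` and, by the mass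
equation and symmetry of mixed partials, `∂ₓ∂ₜq = -f''`; this is the claimed ODE.
-/

open Function Filter

section PartialDerivatives

theorem HasFDerivAt.hasDerivAt_slice_fst {G : ℝ × ℝ → ℝ} {G' : ℝ × ℝ →L[ℝ] ℝ} {s y : ℝ}
    (h : HasFDerivAt G G' (s, y)) : HasDerivAt (fun s => G (s, y)) (G' (1, 0)) s :=
  h.comp_hasDerivAt s ((hasDerivAt_id s).prodMk (hasDerivAt_const s y))

theorem HasFDerivAt.hasDerivAt_slice_snd {G : ℝ × ℝ → ℝ} {G' : ℝ × ℝ →L[ℝ] ℝ} {s y : ℝ}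
    (h : HasFDerivAt G G' (s, y)) : HasDerivAt (fun y => G (s, y)) (G' (0, 1)) y :=
  h.comp_hasDerivAt y ((hasDerivAt_const y s).prodMk (hasDerivAt_id y))

variable {F : ℝ → ℝ → ℝ}

theorem ContDiff.uncurry_deriv_fst {n : WithTop ℕ∞} (hF : ContDiff ℝ (n + 1) (uncurry F)) :
    ContDiff ℝ n (uncurry fun s y => deriv (fun s => F s y) s) := by
  have e : (uncurry fun s y => deriv (fun s => F s y) s) = fun p => fderiv ℝ (uncurry F) p (1, 0) :=
    funext fun p => (hF.differentiable (by simp) p).hasFDerivAt.hasDerivAt_slice_fst.deriv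
  rw [e]
  exact (hF.fderiv_right le_rfl).clm_apply contDiff_const

theorem ContDiff.uncurry_deriv_snd {n : WithTop ℕ∞} (hF : ContDiff ℝ (n + 1) (uncurry F)) :
    ContDiff ℝ n (uncurry fun s y => deriv (F s) y) := by
  have e : (uncurry fun s y => deriv (F s) y) = fun p => fderiv ℝ (uncurry F) p (0, 1) :=
    funext fun p => (hF.differentiable (by simp) p).hasFDerivAt.hasDerivAt_slice_snd.deriv
  rw [e]
  exact (hF.fderiv_right le_rfl).clm_apply contDiff_const

theorem ContDiff.deriv_deriv_comm (hF : ContDiff ℝ 2 (uncurry F)) (s y : ℝ) :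
    deriv (fun y => deriv (fun s => F s y) s) y = deriv (fun s => deriv (F s) y) s := by
  have hF1 : Differentiable ℝ (uncurry F) := hF.differentiable (by simp)
  have hF2 : Differentiable ℝ (fderiv ℝ (uncurry F)) :=
    (hF.fderiv_right (m := 1) (by norm_num)).differentiable (by simp)
  have happly (w : ℝ × ℝ) (p : ℝ × ℝ) : HasFDerivAt (fun p => fderiv ℝ (uncurry F) p w)
      ((fderiv ℝ (fderiv ℝ (uncurry F)) p).flip w) p := by
    simpa using (hF2 p).hasFDerivAt.clm_apply (hasFDerivAt_const w p)
  have e1 : (fun y => deriv (fun s => F s y) s) = fun y => fderiv ℝ (uncurry F) (s, y) (1, 0) :=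
    funext fun y => (hF1 _).hasFDerivAt.hasDerivAt_slice_fst.deriv
  have e2 : (fun s => deriv (F s) y) = fun s => fderiv ℝ (uncurry F) (s, y) (0, 1) :=
    funext fun s => (hF1 _).hasFDerivAt.hasDerivAt_slice_snd.deriv
  rw [e1, e2, (happly _ _).hasDerivAt_slice_snd.deriv, (happly _ _).hasDerivAt_slice_fst.deriv]
  exact (hF.contDiffAt.isSymmSndFDerivAt (by simp)).eq _ _

end PartialDerivatives

theorem DifferentiableAt.deriv_eq_of_eqOn {f g : ℝ → ℝ} {s : Set ℝ} {x g' : ℝ}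
    (hf : DifferentiableAt ℝ f x) (hg : HasDerivWithinAt g g' s x) (hfg : EqOn f g s)
    (hx : x ∈ s) (hs : UniqueDiffWithinAt ℝ s x) : deriv f x = g' :=
  hs.eq_deriv s hf.hasDerivAt.hasDerivWithinAt (hg.congr hfg (hfg hx))

theorem SqInt.add {f g : ℝ → ℝ} (hf : SqInt f) (hg : SqInt g)
    (hfm : AEStronglyMeasurable f (volume.restrict (Ioi 0)))
    (hgm : AEStronglyMeasurable g (volume.restrict (Ioi 0))) :
    SqInt (fun x => f x + g x) :=
  (((memLp_two_iff_integrable_sq hfm).2 hf).add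
    ((memLp_two_iff_integrable_sq hgm).2 hg)).integrable_sq

theorem not_integrableOn_Ioi_of_tendsto_atTop {g : ℝ → ℝ} (a : ℝ)
    (hg : Tendsto g atTop atTop) : ¬ IntegrableOn g (Ioi a) := by
  intro h
  obtain ⟨M, hM⟩ := (hg.eventually_ge_atTop 1).exists_forall_of_atTop
  have hone : IntegrableOn (fun _ => (1 : ℝ)) (Ioi (max a M)) := by
    refine (h.mono_set (Ioi_subset_Ioi (le_max_left a M))).mono' aestronglyMeasurable_const ?_
    refine ae_restrict_of_forall_mem measurableSet_Ioi fun x hx => ?_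
    simpa using hM x (max_lt_iff.1 hx).2.le
  simp [integrableOn_const_iff, Real.volume_Ioi] at hone

theorem tendsto_sq_mul_exp_add_mul_exp_neg_atTop {A B k : ℝ} (hk : 0 < k) (hA : A ≠ 0) :
    Tendsto (fun x => (A * Real.exp (k * x) + B * Real.exp (-(k * x))) ^ 2) atTop atTop := by
  have hlow (x : ℝ) : A ^ 2 * Real.exp (k * x) ^ 2 + 2 * A * B
      ≤ (A * Real.exp (k * x) + B * Real.exp (-(k * x))) ^ 2 := by
    have hcross : Real.exp (k * x) * Real.exp (-(k * x)) = 1 := by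
      rw [← Real.exp_add, add_neg_cancel, Real.exp_zero]
    have hexpand : (A * Real.exp (k * x) + B * Real.exp (-(k * x))) ^ 2
        = A ^ 2 * Real.exp (k * x) ^ 2 + 2 * A * B * (Real.exp (k * x) * Real.exp (-(k * x)))
          + (B * Real.exp (-(k * x))) ^ 2 := by
      ring
    rw [hexpand, hcross]
    linarith [sq_nonneg (B * Real.exp (-(k * x)))]
  refine tendsto_atTop_mono hlow (tendsto_atTop_add_const_right _ _ ?_)
  exact ((tendsto_pow_atTop two_ne_zero).comp
    (Real.tendsto_exp_atTop.comp (tendsto_id.const_mul_atTop hk))).const_mul_atTop (by positivity)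

theorem eq_mul_exp_of_hasDerivWithinAt_Ici {u : ℝ → ℝ} {c : ℝ}
    (hu : ∀ x ∈ Ici (0 : ℝ), HasDerivWithinAt u (c * u x) (Ici 0) x) :
    ∀ x ∈ Ici (0 : ℝ), u x = u 0 * Real.exp (c * x) := by
  set g := fun x => Real.exp (-(c * x)) * u x
  have hg : ∀ x ∈ Ici (0 : ℝ), HasDerivWithinAt g 0 (Ici 0) x := by
    intro x hx
    have he : HasDerivAt (fun x => Real.exp (-(c * x))) (Real.exp (-(c * x)) * -c) x := by
      simpa using ((hasDerivAt_id x).const_mul c).neg.exp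
    exact (he.hasDerivWithinAt.mul (hu x hx)).congr_deriv (by ring)
  intro x hx
  have hconst : g x = g 0 :=
    constant_of_has_deriv_right_zero
      (fun y hy => (hg y hy.1).continuousWithinAt.mono Icc_subset_Ici_self)
      (fun y hy => (hg y hy.1).mono (Ici_subset_Ici.2 hy.1)) x ⟨hx, le_rfl⟩
  simp only [g, mul_zero, Real.exp_zero, Real.exp_neg] at hconst
  field_simp at hconst
  linarith

theorem eq_mul_exp_add_mul_exp_neg {w w' : ℝ → ℝ} {k : ℝ} (hk : k ≠ 0)
    (hw : ∀ x ∈ Ici (0 : ℝ), HasDerivWithinAt w (w' x) (Ici 0) x)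
    (hw' : ∀ x ∈ Ici (0 : ℝ), HasDerivWithinAt w' (k ^ 2 * w x) (Ici 0) x) :
    ∀ x ∈ Ici (0 : ℝ), w x = (w' 0 + k * w 0) / (2 * k) * Real.exp (k * x)
      + (k * w 0 - w' 0) / (2 * k) * Real.exp (-(k * x)) := by
  -- `w' + k w` and `w' - k w` solve the first-order equations `u' = k u` and `u' = -k u`
  have hplus := eq_mul_exp_of_hasDerivWithinAt_Ici (u := fun x => w' x + k * w x) (c := k)
    fun x hx => ((hw' x hx).add ((hw x hx).const_mul k)).congr_deriv (by ring)
  have hminus := eq_mul_exp_of_hasDerivWithinAt_Ici (u := fun x => w' x - k * w x) (c := -k)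
    fun x hx => ((hw' x hx).sub ((hw x hx).const_mul k)).congr_deriv (by ring)
  intro x hx
  have hsub := congrArg₂ (· - ·) (hplus x hx) (hminus x hx)
  simp only [neg_mul] at hsub
  field_simp
  linear_combination hsub

theorem SqInt.deriv_add_mul_eq_zero {w w' : ℝ → ℝ} {k : ℝ} (hk : 0 < k)
    (hw : ∀ x ∈ Ici (0 : ℝ), HasDerivWithinAt w (w' x) (Ici 0) x)
    (hw' : ∀ x ∈ Ici (0 : ℝ), HasDerivWithinAt w' (k ^ 2 * w x) (Ici 0) x)
    (hsq : SqInt w) : w' 0 + k * w 0 = 0 := by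
  by_contra hne
  have hgrowth := tendsto_sq_mul_exp_add_mul_exp_neg_atTop (A := (w' 0 + k * w 0) / (2 * k))
    (B := (k * w 0 - w' 0) / (2 * k)) hk (div_ne_zero hne (by positivity))
  refine not_integrableOn_Ioi_of_tendsto_atTop 0 (hgrowth.congr' ?_) hsq
  filter_upwards [eventually_ge_atTop 0] with x hx
  rw [eq_mul_exp_add_mul_exp_neg hk.ne' hw hw' x hx]

theorem helmholtz_robin_boundary {c : ℝ} (hc : 0 < c) {Q 𝔣 v v1 v2 v3 : ℝ → ℝ}
    (hQ : ContDiff ℝ 2 Q) (h𝔣 : Differentiable ℝ 𝔣)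
    (hv1 : ∀ x ∈ Ici (0 : ℝ), HasDerivWithinAt v (v1 x) (Ici 0) x)
    (hv2 : ∀ x ∈ Ici (0 : ℝ), HasDerivWithinAt v1 (v2 x) (Ici 0) x)
    (hv3 : ∀ x ∈ Ici (0 : ℝ), HasDerivWithinAt v2 (v3 x) (Ici 0) x)
    (hv : ∀ x ∈ Ici (0 : ℝ), v x - c * v2 x = 𝔣 x)
    (hQ𝔣 : ∀ x ∈ Ici (0 : ℝ), Q x - c * iteratedDeriv 2 Q x + deriv 𝔣 x = 0)
    (hQsq : SqInt Q) (hv1sq : SqInt v1) :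
    deriv Q 0 + v2 0 + (√c)⁻¹ * (Q 0 + v1 0) = 0 := by
  have hQ' : Differentiable ℝ (deriv Q) := (hQ.deriv' (n := 1)).differentiable one_ne_zero
  have h𝔣' (x : ℝ) (hx : x ∈ Ici 0) : deriv 𝔣 x = v1 x - c * v3 x :=
    (h𝔣 x).deriv_eq_of_eqOn ((hv1 x hx).sub ((hv3 x hx).const_mul c))
      (fun y hy => (hv y hy).symm) hx (uniqueDiffOn_Ici 0 x hx)
  have hv1c : ContinuousOn v1 (Ici 0) := fun x hx => (hv2 x hx).continuousWithinAt
  refine SqInt.deriv_add_mul_eq_zero (by positivity) (w := fun x => Q x + v1 x)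
    (fun x hx => (hQ.differentiable two_ne_zero x).hasDerivAt.hasDerivWithinAt.add (hv2 x hx))
    (fun x hx => ((hQ' x).hasDerivAt.hasDerivWithinAt.add (hv3 x hx)).congr_deriv ?_)
    (hQsq.add hv1sq hQ.continuous.aestronglyMeasurable
      ((hv1c.mono Ioi_subset_Ici_self).aestronglyMeasurable measurableSet_Ioi))
  have h := hQ𝔣 x hx
  rw [iteratedDeriv_succ, iteratedDeriv_one, h𝔣' x hx] at h
  rw [inv_pow, Real.sq_sqrt hc.le, eq_inv_mul_iff_mul_eq₀ hc.ne']
  linear_combination -h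

theorem iteratedDeriv_two_eq_neg_deriv_deriv_of_mass {ζ q : ℝ → ℝ → ℝ} {a b t x : ℝ}
    (hζ : ContDiff ℝ 2 (uncurry ζ)) (hq : ContDiff ℝ 2 (uncurry q)) (hab : a < b)
    (ht : t ∈ Icc a b) (hmass : ∀ s ∈ Icc a b, deriv (fun s => ζ s x) s + deriv (q s) x = 0) :
    iteratedDeriv 2 (fun s => ζ s x) t = -deriv (fun y => deriv (fun s => q s y) t) x := by
  have hζ' : Differentiable ℝ (fun s => deriv (fun s => ζ s x) s) :=
    ((ContDiff.uncurry_deriv_fst (n := 1) hζ).comp (contDiff_prodMk_left x)).differentiable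
      one_ne_zero
  have hq' : Differentiable ℝ (fun s => deriv (q s) x) :=
    ((ContDiff.uncurry_deriv_snd (n := 1) hq).comp (contDiff_prodMk_left x)).differentiable
      one_ne_zero
  rw [iteratedDeriv_succ, iteratedDeriv_one, hq.deriv_deriv_comm,
    (hζ' t).deriv_eq_of_eqOn (hq' t).hasDerivAt.neg.hasDerivWithinAt
      (fun s hs => eq_neg_of_add_eq_zero_left (hmass s hs)) ht (uniqueDiffOn_Icc hab t ht)]

theorem stmt_9_general (ε μ T : ℝ) (hε : 0 < ε) (hμ : 0 < μ) (hT : 0 < T)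
    (ζ q : ℝ → ℝ → ℝ)
    (hζ : ContDiff ℝ 3 (Function.uncurry ζ))
    (hq : ContDiff ℝ 3 (Function.uncurry q))
    (hpos : ∀ t x, 0 < 1 + ε * ζ t x)
    (mass : ∀ t ∈ Icc (0 : ℝ) T, ∀ x ∈ Ici (0 : ℝ),
      deriv (fun s => ζ s x) t + deriv (fun y => q t y) x = 0)
    (mom : ∀ t ∈ Icc (0 : ℝ) T, ∀ x ∈ Ici (0 : ℝ),
      deriv (fun s => q s x) t
        - μ / 3 * iteratedDeriv 2 (fun y => deriv (fun s => q s y) t) x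
        + deriv (fun y =>
            1 / (2 * ε) * ((1 + ε * ζ t y) ^ 2 - 1)
              + ε * (q t y) ^ 2 / (1 + ε * ζ t y)) x = 0)
    (hL2 : ∀ t ∈ Icc (0 : ℝ) T, SqInt (fun x => deriv (fun s => q s x) t))
    (v v1 v2 v3 : ℝ → ℝ → ℝ)
    (hv1 : ∀ t ∈ Icc (0 : ℝ) T, ∀ x ∈ Ici (0 : ℝ),
      HasDerivWithinAt (v t) (v1 t x) (Ici 0) x)
    (hv2 : ∀ t ∈ Icc (0 : ℝ) T, ∀ x ∈ Ici (0 : ℝ),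
      HasDerivWithinAt (v1 t) (v2 t x) (Ici 0) x)
    (hv3 : ∀ t ∈ Icc (0 : ℝ) T, ∀ x ∈ Ici (0 : ℝ),
      HasDerivWithinAt (v2 t) (v3 t x) (Ici 0) x)
    (hvL2 : ∀ t ∈ Icc (0 : ℝ) T,
      SqInt (v t) ∧ SqInt (v1 t) ∧ SqInt (v2 t) ∧ SqInt (v3 t))
    (hveq : ∀ t ∈ Icc (0 : ℝ) T, ∀ x ∈ Ici (0 : ℝ),
      v t x - μ / 3 * v2 t x =
        1 / (2 * ε) * ((1 + ε * ζ t x) ^ 2 - 1) + ε * (q t x) ^ 2 / (1 + ε * ζ t x))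
    (hvN : ∀ t ∈ Icc (0 : ℝ) T, v1 t 0 = 0) :
    ∀ t ∈ Icc (0 : ℝ) T,
      deriv (fun s => q s 0) t
        - ε / Real.sqrt (μ / 3) * (q t 0) ^ 2 / (1 + ε * ζ t 0)
      = Real.sqrt (μ / 3) * iteratedDeriv 2 (fun s => ζ s 0) t
        + 1 / Real.sqrt (μ / 3) * (1 + ε / 2 * ζ t 0) * ζ t 0
        - 1 / Real.sqrt (μ / 3) * v t 0 := by
  intro t ht
  have hqt : ContDiff ℝ 2 (fun y => deriv (fun s => q s y) t) :=
    (ContDiff.uncurry_deriv_fst (n := 2) hq).comp (contDiff_prodMk_right t)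
  have hflux : Differentiable ℝ fun y =>
      1 / (2 * ε) * ((1 + ε * ζ t y) ^ 2 - 1) + ε * (q t y) ^ 2 / (1 + ε * ζ t y) := by
    have hζt : Differentiable ℝ (ζ t) :=
      (hζ.comp (contDiff_prodMk_right t)).differentiable (by norm_num)
    have hqt : Differentiable ℝ (q t) :=
      (hq.comp (contDiff_prodMk_right t)).differentiable (by norm_num)
    fun_prop (disch := exact fun y => (hpos t y).ne')
  have hrobin := helmholtz_robin_boundary (by positivity) hqt hflux (hv1 t ht) (hv2 t ht)
    (hv3 t ht) (hveq t ht) (mom t ht) (hL2 t ht) (hvL2 t ht).2.1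
  have hf'' := iteratedDeriv_two_eq_neg_deriv_deriv_of_mass (hζ.of_le (by norm_num))
    (hq.of_le (by norm_num)) hT ht fun s hs => mass s hs 0 self_mem_Ici
  have hv0 := hveq t ht 0 self_mem_Ici
  rw [hvN t ht] at hrobin
  rw [← Real.sq_sqrt (by positivity : 0 ≤ μ / 3)] at hv0
  rw [hf'']
  field_simp at hrobin ⊢
  -- the last term turns `(1 / (2ε)) ((1 + εf)² - 1)` into `f + (ε/2) f²`
  linear_combination 2 * √(μ / 3) * hrobin + 2 * hv0
    + (2 * ζ t 0 + ε * ζ t 0 ^ 2) * mul_inv_cancel₀ hε.ne'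

/-- Proposition 1 of the paper: for a C³ solution `(ζ,q)` of the dimensionless
Abbott–Boussinesq system, the boundary values `q̄(t) = q(t,0)` and
`f(t) = ζ(t,0)` satisfy the nonlinear ODE
`q̄′ − (ε/δ) q̄²/(1+εf) = δ f″ + (1/δ)(1 + (ε/2)f) f − (1/δ) R̲₁𝔣(ζ,q)`,
where for each `t`, `v(t,·) = R₁𝔣(ζ,q)(t,·)` is the Neumann half-line solution
and `δ = √(μ/3)`. -/
theorem stmt_9 (ε μ T : ℝ) (hε : 0 < ε) (hμ : 0 < μ) (hT : 0 < T)
    (ζ q : ℝ → ℝ → ℝ)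
    (hζ : ContDiff ℝ 3 (Function.uncurry ζ))
    (hq : ContDiff ℝ 3 (Function.uncurry q))
    (hpos : ∀ t x, 0 < 1 + ε * ζ t x)
    (mass : ∀ t ∈ Icc (0 : ℝ) T, ∀ x ∈ Ici (0 : ℝ),
      deriv (fun s => ζ s x) t + deriv (fun y => q t y) x = 0)
    (mom : ∀ t ∈ Icc (0 : ℝ) T, ∀ x ∈ Ici (0 : ℝ),
      deriv (fun s => q s x) t
        - μ / 3 * iteratedDeriv 2 (fun y => deriv (fun s => q s y) t) x
        + deriv (fun y =>
            1 / (2 * ε) * ((1 + ε * ζ t y) ^ 2 - 1)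
              + ε * (q t y) ^ 2 / (1 + ε * ζ t y)) x = 0)
    (hL2 : ∀ t ∈ Icc (0 : ℝ) T, SqInt (fun x => deriv (fun s => q s x) t))
    (v v1 v2 v3 : ℝ → ℝ → ℝ)
    (hv1 : ∀ t ∈ Icc (0 : ℝ) T, ∀ x ∈ Ici (0 : ℝ),
      HasDerivWithinAt (v t) (v1 t x) (Ici 0) x)
    (hv2 : ∀ t ∈ Icc (0 : ℝ) T, ∀ x ∈ Ici (0 : ℝ),
      HasDerivWithinAt (v1 t) (v2 t x) (Ici 0) x)
    (hv3 : ∀ t ∈ Icc (0 : ℝ) T, ∀ x ∈ Ici (0 : ℝ),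
      HasDerivWithinAt (v2 t) (v3 t x) (Ici 0) x)
    (hv3c : ∀ t ∈ Icc (0 : ℝ) T, ContinuousOn (v3 t) (Ici 0))
    (hvL2 : ∀ t ∈ Icc (0 : ℝ) T,
      SqInt (v t) ∧ SqInt (v1 t) ∧ SqInt (v2 t) ∧ SqInt (v3 t))
    (hveq : ∀ t ∈ Icc (0 : ℝ) T, ∀ x ∈ Ici (0 : ℝ),
      v t x - μ / 3 * v2 t x =
        1 / (2 * ε) * ((1 + ε * ζ t x) ^ 2 - 1) + ε * (q t x) ^ 2 / (1 + ε * ζ t x))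
    (hvN : ∀ t ∈ Icc (0 : ℝ) T, v1 t 0 = 0) :
    ∀ t ∈ Icc (0 : ℝ) T,
      deriv (fun s => q s 0) t
        - ε / Real.sqrt (μ / 3) * (q t 0) ^ 2 / (1 + ε * ζ t 0)
      = Real.sqrt (μ / 3) * iteratedDeriv 2 (fun s => ζ s 0) t
        + 1 / Real.sqrt (μ / 3) * (1 + ε / 2 * ζ t 0) * ζ t 0
        - 1 / Real.sqrt (μ / 3) * v t 0 :=
  stmt_9_general ε μ T hε hμ hT ζ q hζ hq hpos mass mom hL2 v v1 v2 v3 hv1 hv2 hv3 hvL2 hveq hvN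
end

section
/- Let ε, μ > 0, c ∈ ℝ, and let Z : ℝ → ℝ be a C² function with 1 + εZ > 0 everywhere, satisfying the traveling-wave profile equation −c² Z/(1 + εZ) + Z + (ε/2) Z² + (c² μ/3) Z″ = 0 on ℝ, and such that Z(x) → 0 and Z′(x) → 0 as x → +∞. Then for every x ∈ ℝ, −(c²/ε) ( Z(x) − ln(1 + ε Z(x))/ε ) + (c² μ/6) Z′(x)² + (ε/6) Z(x)³ + Z(x)²/2 = 0. -/
/-!
Along a solution, the derivative of `profileFirstIntegral ε μ c (Z x) (Z′ x)` is `Z′ x` times the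
left side of the profile equation, so it vanishes; the first integral is therefore constant, and
its limit at `+∞` is its value at `(0, 0)`, which is `0`.
-/

open Filter Topology

/-- The first integral, with `z` and `p` standing for `Z x` and `Z′ x`. -/
noncomputable def profileFirstIntegral (ε μ c z p : ℝ) : ℝ :=
  -(c ^ 2 / ε) * (z - Real.log (1 + ε * z) / ε) + c ^ 2 * μ / 6 * p ^ 2
    + ε / 6 * z ^ 3 + z ^ 2 / 2

theorem eq_of_hasDerivAt_zero_of_tendsto_atTop {E : Type*} [NormedAddCommGroup E]
    [NormedSpace ℝ E] {f : ℝ → E} {L : E} (hf : ∀ x, HasDerivAt f 0 x)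
    (hlim : Tendsto f atTop (𝓝 L)) (x : ℝ) : f x = L := by
  have hconst : f = fun _ => f x := funext fun y =>
    is_const_of_deriv_eq_zero (fun t => (hf t).differentiableAt) (fun t => (hf t).deriv) y x
  rw [hconst] at hlim
  exact tendsto_nhds_unique tendsto_const_nhds hlim

theorem hasDerivAt_profileFirstIntegral {ε μ c : ℝ} (hε : ε ≠ 0) {Z Z' : ℝ → ℝ} {x z'' : ℝ}
    (hZ : HasDerivAt Z (Z' x) x) (hZ' : HasDerivAt Z' z'' x) (hpos : 1 + ε * Z x ≠ 0) :
    HasDerivAt (fun y => profileFirstIntegral ε μ c (Z y) (Z' y))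
      (Z' x * (-c ^ 2 * Z x / (1 + ε * Z x) + Z x + ε / 2 * Z x ^ 2 + c ^ 2 * μ / 3 * z'')) x := by
  have hlog : HasDerivAt (fun y => Real.log (1 + ε * Z y)) (ε * Z' x / (1 + ε * Z x)) x := by
    simpa using ((hZ.const_mul ε).const_add 1).log hpos
  have h := ((((hZ.sub (hlog.div_const ε)).const_mul (-(c ^ 2 / ε))).add
      ((hZ'.pow 2).const_mul (c ^ 2 * μ / 6))).add ((hZ.pow 3).const_mul (ε / 6))).add
      ((hZ.pow 2).div_const 2)
  refine h.congr_deriv ?_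
  field_simp
  ring

theorem tendsto_profileFirstIntegral_zero {ε μ c : ℝ} {α : Type*} {l : Filter α} {z p : α → ℝ}
    (hz : Tendsto z l (𝓝 0)) (hp : Tendsto p l (𝓝 0)) :
    Tendsto (fun a => profileFirstIntegral ε μ c (z a) (p a)) l (𝓝 0) := by
  have hcont : ContinuousAt (fun q : ℝ × ℝ => profileFirstIntegral ε μ c q.1 q.2) (0, 0) := by
    unfold profileFirstIntegral
    fun_prop (disch := norm_num)
  have h := hcont.tendsto.comp (hz.prodMk_nhds hp)
  rwa [show profileFirstIntegral ε μ c 0 0 = 0 by simp [profileFirstIntegral]] at h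

theorem stmt_12_general (ε μ c : ℝ) (hε : 0 < ε)
    (Z : ℝ → ℝ) (hZ : ContDiff ℝ 2 Z)
    (hpos : ∀ x, 0 < 1 + ε * Z x)
    (heq : ∀ x : ℝ,
      -c ^ 2 * Z x / (1 + ε * Z x) + Z x + ε / 2 * (Z x) ^ 2
        + c ^ 2 * μ / 3 * iteratedDeriv 2 Z x = 0)
    (hZ0 : Tendsto Z atTop (nhds 0))
    (hZ'0 : Tendsto (deriv Z) atTop (nhds 0)) :
    ∀ x : ℝ,
      -(c ^ 2 / ε) * (Z x - Real.log (1 + ε * Z x) / ε)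
        + c ^ 2 * μ / 6 * (deriv Z x) ^ 2
        + ε / 6 * (Z x) ^ 3 + (Z x) ^ 2 / 2 = 0 := by
  have hZ' : Differentiable ℝ (deriv Z) := hZ.differentiable_deriv_two
  have hZ'' : ∀ y, deriv (deriv Z) y = iteratedDeriv 2 Z y := fun y => by
    rw [iteratedDeriv_succ, iteratedDeriv_one]
  refine eq_of_hasDerivAt_zero_of_tendsto_atTop (fun y => ?_)
    (tendsto_profileFirstIntegral_zero hZ0 hZ'0)
  have h := hasDerivAt_profileFirstIntegral (μ := μ) (c := c) hε.ne'
    ((hZ.differentiable two_ne_zero) y).hasDerivAt (hZ' y).hasDerivAt (hpos y).ne'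
  rwa [hZ'', heq y, mul_zero] at h

/-- First integral of the solitary-wave profile equation: multiplying
`−c²Z/(1+εZ) + Z + (ε/2)Z² + (c²μ/3)Z″ = 0` by `Z′` and integrating, using the
decay of `Z` and `Z′` at `+∞`, yields
`−(c²/ε)(Z − ln(1+εZ)/ε) + (c²μ/6)(Z′)² + (ε/6)Z³ + Z²/2 = 0`. -/
theorem stmt_12 (ε μ c : ℝ) (hε : 0 < ε) (hμ : 0 < μ)
    (Z : ℝ → ℝ) (hZ : ContDiff ℝ 2 Z)
    (hpos : ∀ x, 0 < 1 + ε * Z x)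
    (heq : ∀ x : ℝ,
      -c ^ 2 * Z x / (1 + ε * Z x) + Z x + ε / 2 * (Z x) ^ 2
        + c ^ 2 * μ / 3 * iteratedDeriv 2 Z x = 0)
    (hZ0 : Tendsto Z atTop (nhds 0))
    (hZ'0 : Tendsto (deriv Z) atTop (nhds 0)) :
    ∀ x : ℝ,
      -(c ^ 2 / ε) * (Z x - Real.log (1 + ε * Z x) / ε)
        + c ^ 2 * μ / 6 * (deriv Z x) ^ 2
        + ε / 6 * (Z x) ^ 3 + (Z x) ^ 2 / 2 = 0 :=
  stmt_12_general ε μ c hε Z hZ hpos heq hZ0 hZ'0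
end
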